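/- arXiv:0906.2943 — 2 statements merged into one kernel-verified Lean document; each statement's English description precedes it below -/
import Mathlib

section
/- Let D ⊆ {z ∈ ℂ : Im z ≥ 0} and m₁, m₂ : D → [0,∞). Then the following are equivalent: (1) R_{m₁}(H) ⊆ R_{m₂}(H); (2) there exists λ > 0 with B_{m₁}(H) ⊆ λ·B_{m₂}(H) := {λ·G : G ∈ B_{m₂}(H)}; (3) there exists c > 0 such that m₁^♭(z) ≤ c·m₂^♭(z) for all z with Im z ≥ 0. -/
/-!
(2) ⇒ (1) and (2) ⇒ (3) are rescalings. For (1) ⇒ (2), `B_{m₁}` is a closed, convex, bounded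
subset of the Hilbert space, each element of which is bounded by some multiple of `m₂`; by Baire
category one multiple works on a relative ball of `B_{m₁}`, and convexity spreads that bound over
all of `B_{m₁}`. For (3) ⇒ (2), `B_{m₁}` is stable under `F ↦ F^#`, so for `F ∈ B_{m₁}` and `z ∈ D`
both `|F(z)|` and `|F(z̄)| = |F^#(z)|` are at most `m₁^♭(z) ≤ c m₂^♭(z) ≤ c m₂(z)`.
-/

open Complex Filter Topology

noncomputable section

variable {H : Type*} [NormedAddCommGroup H] [InnerProductSpace ℂ H] [CompleteSpace H]

/-- The set `R_m(H)`. -/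
def RmSet (ev : H →ₗ[ℂ] (ℂ → ℂ)) (D : Set ℂ) (m : ℂ → ℝ) : Set H :=
  {F | ∃ C : ℝ, 0 ≤ C ∧ ∀ z ∈ D,
      ‖ev F z‖ ≤ C * m z ∧
      ‖(starRingEnd ℂ) (ev F ((starRingEnd ℂ) z))‖ ≤ C * m z}

/-- The norm `‖F‖_m`. -/
def mnorm (ev : H →ₗ[ℂ] (ℂ → ℂ)) (D : Set ℂ) (m : ℂ → ℝ) (F : H) : ℝ :=
  max ‖F‖ (sInf {C : ℝ | 0 ≤ C ∧ ∀ z ∈ D,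
      ‖ev F z‖ ≤ C * m z ∧
      ‖(starRingEnd ℂ) (ev F ((starRingEnd ℂ) z))‖ ≤ C * m z})

/-- The ball `B_m(H)` (for majorization on `D`). -/
def BmSet (ev : H →ₗ[ℂ] (ℂ → ℂ)) (D : Set ℂ) (m : ℂ → ℝ) : Set H :=
  {F | ‖F‖ ≤ 1 ∧ ∀ z ∈ D,
      ‖ev F z‖ ≤ m z ∧
      ‖(starRingEnd ℂ) (ev F ((starRingEnd ℂ) z))‖ ≤ m z}

/-- The sharp majorant `m^♭(z) = sup{|F(z)| : F ∈ B_m(H)}` (with `sup ∅ = 0`,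
following the convention of `Real.sSup`). -/
def mflat (ev : H →ₗ[ℂ] (ℂ → ℂ)) (D : Set ℂ) (m : ℂ → ℝ) (z : ℂ) : ℝ :=
  sSup ((fun F : H => ‖ev F z‖) '' BmSet ev D m)

open Set ComplexConjugate

theorem Convex.exists_forall_seminorm_le_mul {E ι : Type*} [NormedAddCommGroup E]
    [NormedSpace ℝ E] [CompleteSpace E] (q : ι → Seminorm ℝ E) (hq : ∀ i, Continuous (q i))
    (b : ι → ℝ) (hb : ∀ i, 0 ≤ b i) {B : Set E} (hBconv : Convex ℝ B) (hBclosed : IsClosed B)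
    (hBbdd : Bornology.IsBounded B) (hbound : ∀ x ∈ B, ∃ C : ℝ, ∀ i, q i x ≤ C * b i) :
    ∃ c : ℝ, ∀ x ∈ B, ∀ i, q i x ≤ c * b i := by
  rcases B.eq_empty_or_nonempty with rfl | ⟨x₀, hx₀⟩
  · exact ⟨0, by simp⟩
  have : CompleteSpace B := hBclosed.completeSpace_coe
  have : Nonempty B := ⟨⟨x₀, hx₀⟩⟩
  set K : ℕ → Set E := fun n => {x | ∀ i, q i x ≤ n * b i}
  have hK : ∀ n, IsClosed (Subtype.val ⁻¹' K n : Set B) := fun n => by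
    refine IsClosed.preimage continuous_subtype_val ?_
    simpa only [K, ofPred_forall] using
      isClosed_iInter fun i => isClosed_le (hq i) continuous_const
  have hKcover : ⋃ n, (Subtype.val ⁻¹' K n : Set B) = univ := by
    refine eq_univ_of_forall fun x => mem_iUnion.2 ?_
    obtain ⟨C, hC⟩ := hbound x x.2
    exact ⟨⌈C⌉₊, fun i => (hC i).trans (by gcongr; exacts [hb i, Nat.le_ceil C])⟩
  obtain ⟨n, ⟨x₀, hx₀⟩, hint⟩ := nonempty_interior_of_iUnion_of_closed hK hKcover
  obtain ⟨ε, hε, hball⟩ := Metric.mem_nhds_iff.1 (mem_interior_iff_mem_nhds.1 hint)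
  obtain ⟨R, hR⟩ := Metric.isBounded_iff.1 hBbdd
  obtain ⟨t, ht, htR⟩ := exists_pos_mul_lt hε R
  set s := min t 1
  have hs : 0 < s := lt_min ht one_pos
  refine ⟨2 * n / s + n, fun x hx i => ?_⟩
  -- `y ∈ B` is close to `x₀` and `s • (x - x₀) = y - x₀`, so the bounds at `y` and `x₀` control `x`.
  set y := x₀ + s • (x - x₀)
  have hy : y ∈ B := hBconv.add_smul_sub_mem hx₀ hx ⟨hs.le, min_le_right _ _⟩
  have hyK : y ∈ K n := hball (a := ⟨y, hy⟩) <| by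
    rw [Metric.mem_ball, Subtype.dist_eq, dist_eq_norm, add_sub_cancel_left, norm_smul,
      Real.norm_of_nonneg hs.le, ← dist_eq_norm]
    calc s * dist x x₀ ≤ t * R := by
          gcongr; exacts [min_le_left _ _, hR hx hx₀]
      _ = R * t := mul_comm _ _
      _ < ε := htR
  have hx₀K : x₀ ∈ K n := hball (Metric.mem_ball_self hε)
  have hdiff : s * q i (x - x₀) ≤ 2 * n * b i :=
    calc s * q i (x - x₀) = q i (y - x₀) := by
          rw [add_sub_cancel_left, map_smul_eq_mul, Real.norm_of_nonneg hs.le]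
      _ ≤ q i y + q i x₀ := map_sub_le_add _ _ _
      _ ≤ n * b i + n * b i := add_le_add (hyK i) (hx₀K i)
      _ = 2 * n * b i := by ring
  calc q i x = q i ((x - x₀) + x₀) := by rw [sub_add_cancel]
    _ ≤ q i (x - x₀) + q i x₀ := map_add_le_add _ _ _
    _ ≤ 2 * n * b i / s + n * b i := add_le_add ((le_div_iff₀' hs).2 hdiff) (hx₀K i)
    _ = (2 * n / s + n) * b i := by ring

section
variable (ev : H →ₗ[ℂ] (ℂ → ℂ)) {D : Set ℂ} {m : ℂ → ℝ}
omit [CompleteSpace H]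

-- `max |F(z)| |F^#(z)|`, written with `|F^#(z)| = |F(z̄)|`.
def evalPairSeminorm (z : ℂ) : Seminorm ℝ H :=
  (normSeminorm ℝ ℂ).comp (((LinearMap.proj z).comp ev).restrictScalars ℝ) ⊔
    (normSeminorm ℝ ℂ).comp (((LinearMap.proj (conj z)).comp ev).restrictScalars ℝ)

theorem evalPairSeminorm_apply (z : ℂ) (F : H) :
    evalPairSeminorm ev z F = max ‖ev F z‖ ‖ev F (conj z)‖ :=
  rfl

theorem continuous_evalPairSeminorm (heval : ∀ w : ℂ, Continuous fun F : H => ev F w) (z : ℂ) :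
    Continuous (evalPairSeminorm ev z) :=
  (heval z).norm.max (heval (conj z)).norm

theorem mem_rmSet_iff {F : H} :
    F ∈ RmSet ev D m ↔ ∃ C, 0 ≤ C ∧ ∀ z ∈ D, evalPairSeminorm ev z F ≤ C * m z := by
  simp only [RmSet, evalPairSeminorm_apply, max_le_iff, norm_conj, mem_ofPred_eq]

theorem bmSet_eq :
    BmSet ev D m = Metric.closedBall 0 1 ∩ ⋂ z ∈ D, {F | evalPairSeminorm ev z F ≤ m z} := by
  ext F
  simp only [BmSet, evalPairSeminorm_apply, max_le_iff, norm_conj, mem_ofPred_eq, mem_inter_iff,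
    mem_iInter, mem_closedBall_zero_iff]

theorem mem_bmSet_iff {F : H} :
    F ∈ BmSet ev D m ↔ ‖F‖ ≤ 1 ∧ ∀ z ∈ D, evalPairSeminorm ev z F ≤ m z := by
  simp only [bmSet_eq, mem_inter_iff, mem_iInter, mem_closedBall_zero_iff, mem_ofPred_eq]

theorem isClosed_bmSet (heval : ∀ w : ℂ, Continuous fun F : H => ev F w) :
    IsClosed (BmSet ev D m) := by
  rw [bmSet_eq]
  exact Metric.isClosed_closedBall.inter <| isClosed_biInter fun z _ =>
    isClosed_le (continuous_evalPairSeminorm ev heval z) continuous_const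

theorem convex_bmSet : Convex ℝ (BmSet ev D m) := by
  rw [bmSet_eq]
  refine (convex_closedBall 0 1).inter <| convex_iInter₂ fun z _ => ?_
  simpa only [mem_univ, true_and] using (evalPairSeminorm ev z).convexOn.convex_le (m z)

theorem isBounded_bmSet : Bornology.IsBounded (BmSet ev D m) :=
  Metric.isBounded_closedBall.subset (bmSet_eq ev ▸ inter_subset_left)

theorem mem_image_smul_bmSet_iff {a : ℝ} (ha : 0 < a) {F : H} :
    F ∈ (fun G : H => (a : ℂ) • G) '' BmSet ev D m ↔
      ‖F‖ ≤ a ∧ ∀ z ∈ D, evalPairSeminorm ev z F ≤ a * m z := by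
  simp only [Complex.coe_smul]
  constructor
  · rintro ⟨G, hG, rfl⟩
    rw [mem_bmSet_iff] at hG
    simp only [norm_smul, map_smul_eq_mul, Real.norm_of_nonneg ha.le]
    exact ⟨by simpa using mul_le_mul_of_nonneg_left hG.1 ha.le,
      fun z hz => mul_le_mul_of_nonneg_left (hG.2 z hz) ha.le⟩
  · rintro ⟨hF, hFz⟩
    refine ⟨a⁻¹ • F, (mem_bmSet_iff ev).2 ⟨?_, fun z hz => ?_⟩, smul_inv_smul₀ ha.ne' F⟩
    · rw [norm_smul, Real.norm_of_nonneg (inv_nonneg.2 ha.le), inv_mul_le_one₀ ha]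
      exact hF
    · rw [map_smul_eq_mul, Real.norm_of_nonneg (inv_nonneg.2 ha.le), inv_mul_le_iff₀ ha]
      exact hFz z hz

theorem bmSet_subset_rmSet : BmSet ev D m ⊆ RmSet ev D m := fun _ hF =>
  (mem_rmSet_iff ev).2 ⟨1, zero_le_one, by simpa only [one_mul] using ((mem_bmSet_iff ev).1 hF).2⟩

theorem image_smul_bmSet_subset_rmSet {a : ℝ} (ha : 0 < a) :
    (fun G : H => (a : ℂ) • G) '' BmSet ev D m ⊆ RmSet ev D m := fun _ hF =>
  (mem_rmSet_iff ev).2 ⟨a, ha.le, ((mem_image_smul_bmSet_iff ev ha).1 hF).2⟩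

theorem bddAbove_norm_image_bmSet (heval : ∀ w : ℂ, Continuous fun F : H => ev F w) (z : ℂ) :
    BddAbove ((fun F : H => ‖ev F z‖) '' BmSet ev D m) := by
  let φ : H →L[ℂ] ℂ := ⟨(LinearMap.proj z).comp ev, heval z⟩
  refine ⟨‖φ‖, ?_⟩
  rintro _ ⟨F, hF, rfl⟩
  exact (φ.le_opNorm F).trans (mul_le_of_le_one_right (norm_nonneg φ) hF.1)

theorem norm_le_mflat (heval : ∀ w : ℂ, Continuous fun F : H => ev F w) {F : H}
    (hF : F ∈ BmSet ev D m) (z : ℂ) : ‖ev F z‖ ≤ mflat ev D m z :=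
  le_csSup (bddAbove_norm_image_bmSet ev heval z) ⟨F, hF, rfl⟩

theorem mflat_nonneg (z : ℂ) : 0 ≤ mflat ev D m z :=
  Real.sSup_nonneg (by rintro _ ⟨F, _, rfl⟩; exact norm_nonneg _)

theorem mflat_le {z : ℂ} (hz : z ∈ D) (hm : 0 ≤ m z) : mflat ev D m z ≤ m z :=
  Real.sSup_le (by rintro _ ⟨F, hF, rfl⟩; exact (hF.2 z hz).1) hm

theorem mem_bmSet_of_sharp {F G : H} (hG : ∀ z, ev G z = conj (ev F (conj z)))
    (hGF : ‖G‖ = ‖F‖) (hF : F ∈ BmSet ev D m) : G ∈ BmSet ev D m := by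
  rw [mem_bmSet_iff] at hF ⊢
  refine ⟨hGF ▸ hF.1, fun z hz => ?_⟩
  simpa only [evalPairSeminorm_apply, hG, norm_conj, conj_conj, max_comm] using hF.2 z hz

theorem evalPairSeminorm_le_mflat (heval : ∀ w : ℂ, Continuous fun F : H => ev F w)
    (hsharp : ∀ F : H, ∃ G : H, (∀ z, ev G z = conj (ev F (conj z))) ∧ ‖G‖ = ‖F‖)
    {F : H} (hF : F ∈ BmSet ev D m) (z : ℂ) : evalPairSeminorm ev z F ≤ mflat ev D m z := by
  obtain ⟨G, hG, hGF⟩ := hsharp F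
  have hGz := norm_le_mflat ev heval (mem_bmSet_of_sharp ev hG hGF hF) z
  rw [hG, norm_conj] at hGz
  exact max_le (norm_le_mflat ev heval hF z) hGz

variable {m₁ m₂ : ℂ → ℝ}

theorem rmSet_subset_of_bmSet_subset (hm₁ : ∀ z ∈ D, 0 ≤ m₁ z) {l : ℝ} (hl : 0 < l)
    (h : BmSet ev D m₁ ⊆ (fun G : H => (l : ℂ) • G) '' BmSet ev D m₂) :
    RmSet ev D m₁ ⊆ RmSet ev D m₂ := by
  intro F hF
  obtain ⟨C, hC, hFC⟩ := (mem_rmSet_iff ev).1 hF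
  obtain ⟨a, ha, hFa, hCa⟩ : ∃ a : ℝ, 0 < a ∧ ‖F‖ ≤ a ∧ C ≤ a :=
    ⟨‖F‖ + C + 1, by linarith [norm_nonneg F], by linarith, by linarith [norm_nonneg F]⟩
  obtain ⟨G₁, hG₁, rfl⟩ := (mem_image_smul_bmSet_iff ev ha).2
    ⟨hFa, fun z hz => (hFC z hz).trans (by gcongr; exact hm₁ z hz)⟩
  obtain ⟨G₂, hG₂, rfl⟩ := h hG₁
  exact image_smul_bmSet_subset_rmSet ev (mul_pos ha hl) ⟨G₂, hG₂, by
    simp only [ofReal_mul, mul_smul]⟩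

theorem mflat_le_mul_of_bmSet_subset (heval : ∀ w : ℂ, Continuous fun F : H => ev F w)
    {l : ℝ} (hl : 0 < l) (h : BmSet ev D m₁ ⊆ (fun G : H => (l : ℂ) • G) '' BmSet ev D m₂)
    (z : ℂ) : mflat ev D m₁ z ≤ l * mflat ev D m₂ z := by
  refine Real.sSup_le ?_ (mul_nonneg hl.le (mflat_nonneg ev z))
  rintro _ ⟨F, hF, rfl⟩
  obtain ⟨G, hG, rfl⟩ := h hF
  dsimp only
  rw [map_smul, Pi.smul_apply, smul_eq_mul, norm_mul, norm_real, Real.norm_of_nonneg hl.le]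
  exact mul_le_mul_of_nonneg_left (norm_le_mflat ev heval hG z) hl.le

theorem exists_bmSet_subset_of_mflat_le (heval : ∀ w : ℂ, Continuous fun F : H => ev F w)
    (hsharp : ∀ F : H, ∃ G : H, (∀ z, ev G z = conj (ev F (conj z))) ∧ ‖G‖ = ‖F‖)
    (hm₂ : ∀ z ∈ D, 0 ≤ m₂ z) {c : ℝ} (hc : 0 ≤ c)
    (h : ∀ z ∈ D, mflat ev D m₁ z ≤ c * mflat ev D m₂ z) :
    ∃ l : ℝ, 0 < l ∧ BmSet ev D m₁ ⊆ (fun G : H => (l : ℂ) • G) '' BmSet ev D m₂ := by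
  refine ⟨max c 1, by positivity, fun F hF => (mem_image_smul_bmSet_iff ev (by positivity)).2
    ⟨hF.1.trans (le_max_right _ _), fun z hz => ?_⟩⟩
  calc evalPairSeminorm ev z F ≤ mflat ev D m₁ z := evalPairSeminorm_le_mflat ev heval hsharp hF z
    _ ≤ c * mflat ev D m₂ z := h z hz
    _ ≤ c * m₂ z := by gcongr; exact mflat_le ev hz (hm₂ z hz)
    _ ≤ max c 1 * m₂ z := by gcongr; exacts [hm₂ z hz, le_max_left _ _]

end

theorem exists_bmSet_subset_of_rmSet_subset (ev : H →ₗ[ℂ] (ℂ → ℂ))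
    (heval : ∀ w : ℂ, Continuous fun F : H => ev F w) {D : Set ℂ} {m₁ m₂ : ℂ → ℝ}
    (hm₂ : ∀ z ∈ D, 0 ≤ m₂ z) (h : RmSet ev D m₁ ⊆ RmSet ev D m₂) :
    ∃ l : ℝ, 0 < l ∧ BmSet ev D m₁ ⊆ (fun G : H => (l : ℂ) • G) '' BmSet ev D m₂ := by
  obtain ⟨c, hc⟩ := (convex_bmSet ev).exists_forall_seminorm_le_mul
    (fun z : D => evalPairSeminorm ev z) (fun z => continuous_evalPairSeminorm ev heval z)
    (fun z => m₂ z) (fun z => hm₂ z z.2) (isClosed_bmSet ev heval) (isBounded_bmSet ev)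
    fun F hF => by
      obtain ⟨C, -, hC⟩ := (mem_rmSet_iff ev).1 (h (bmSet_subset_rmSet ev hF))
      exact ⟨C, fun z => hC z z.2⟩
  refine ⟨max c 1, by positivity, fun F hF => (mem_image_smul_bmSet_iff ev (by positivity)).2
    ⟨hF.1.trans (le_max_right _ _), fun z hz => (hc F hF ⟨z, hz⟩).trans ?_⟩⟩
  gcongr
  exacts [hm₂ z hz, le_max_left _ _]

theorem rm_subset_iff_ball_subset_iff_mflat_le_general
    (ev : H →ₗ[ℂ] (ℂ → ℂ))
    (heval : ∀ w : ℂ, Continuous fun F : H => ev F w)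
    (hsharp : ∀ F : H, ∃ G : H,
      (∀ z : ℂ, ev G z = (starRingEnd ℂ) (ev F ((starRingEnd ℂ) z))) ∧ ‖G‖ = ‖F‖)
    (D : Set ℂ) (hD : D ⊆ {z : ℂ | 0 ≤ z.im})
    (m₁ m₂ : ℂ → ℝ) (hm₁ : ∀ z ∈ D, 0 ≤ m₁ z) (hm₂ : ∀ z ∈ D, 0 ≤ m₂ z) :
    ((RmSet ev D m₁ ⊆ RmSet ev D m₂) ↔
      (∃ l : ℝ, 0 < l ∧
        BmSet ev D m₁ ⊆ (fun G : H => (l : ℂ) • G) '' BmSet ev D m₂)) ∧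
    ((∃ l : ℝ, 0 < l ∧
        BmSet ev D m₁ ⊆ (fun G : H => (l : ℂ) • G) '' BmSet ev D m₂) ↔
      (∃ c : ℝ, 0 < c ∧ ∀ z : ℂ, 0 ≤ z.im →
        mflat ev D m₁ z ≤ c * mflat ev D m₂ z)) := by
  refine ⟨⟨exists_bmSet_subset_of_rmSet_subset ev heval hm₂,
    fun ⟨l, hl, h⟩ => rmSet_subset_of_bmSet_subset ev hm₁ hl h⟩, ⟨?_, ?_⟩⟩
  · rintro ⟨l, hl, h⟩
    exact ⟨l, hl, fun z _ => mflat_le_mul_of_bmSet_subset ev heval hl h z⟩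
  · rintro ⟨c, hc, h⟩
    exact exists_bmSet_subset_of_mflat_le ev heval hsharp hm₂ hc.le fun z hz => h z (hD hz)

/-- **Statement 17.** `R_{m₁}(H) ⊆ R_{m₂}(H)` iff `B_{m₁}(H) ⊆ λ·B_{m₂}(H)` for some
`λ > 0`, iff `m₁^♭ ≲ m₂^♭` on the closed upper half-plane. -/
theorem rm_subset_iff_ball_subset_iff_mflat_le
    (ev : H →ₗ[ℂ] (ℂ → ℂ)) (hinj : Function.Injective ev)
    (hentire : ∀ F : H, Differentiable ℂ (ev F))
    (heval : ∀ w : ℂ, Continuous fun F : H => ev F w)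
    (hsharp : ∀ F : H, ∃ G : H,
      (∀ z : ℂ, ev G z = (starRingEnd ℂ) (ev F ((starRingEnd ℂ) z))) ∧ ‖G‖ = ‖F‖)
    (D : Set ℂ) (hD : D ⊆ {z : ℂ | 0 ≤ z.im})
    (m₁ m₂ : ℂ → ℝ) (hm₁ : ∀ z ∈ D, 0 ≤ m₁ z) (hm₂ : ∀ z ∈ D, 0 ≤ m₂ z) :
    ((RmSet ev D m₁ ⊆ RmSet ev D m₂) ↔
      (∃ l : ℝ, 0 < l ∧
        BmSet ev D m₁ ⊆ (fun G : H => (l : ℂ) • G) '' BmSet ev D m₂)) ∧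
    ((∃ l : ℝ, 0 < l ∧
        BmSet ev D m₁ ⊆ (fun G : H => (l : ℂ) • G) '' BmSet ev D m₂) ↔
      (∃ c : ℝ, 0 < c ∧ ∀ z : ℂ, 0 ≤ z.im →
        mflat ev D m₁ z ≤ c * mflat ev D m₂ z)) :=
  rm_subset_iff_ball_subset_iff_mflat_le_general ev heval hsharp D hD m₁ m₂ hm₁ hm₂
end
end

section
/- Let D ⊆ {z ∈ ℂ : Im z ≥ 0} and m : D → [0,∞). Then the function m^♭ is real-valued (finite) and continuous on the closed upper half-plane {z ∈ ℂ : Im z ≥ 0}. -/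
/-!
By Banach–Steinhaus the point evaluations at the points of a compact set are uniformly bounded,
so the unit ball of `H` is a locally uniformly bounded family of entire functions. Cauchy estimates
make it equi-Lipschitz on every disc, and a finite pointwise supremum of an equi-Lipschitz family
is Lipschitz. Hence `m^♭` is finite and locally Lipschitz on the whole plane.
-/

open Complex Filter Topology

noncomputable section

variable {H : Type*} [NormedAddCommGroup H] [InnerProductSpace ℂ H] [CompleteSpace H]

open Metric
open scoped NNReal

section SupLipschitz

variable {α ι : Type*} [PseudoMetricSpace α]

theorem LipschitzOnWith.csSup_image {f : ι → α → ℝ} {s : Set ι} {t : Set α} {K : ℝ≥0}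
    (hf : ∀ i ∈ s, LipschitzOnWith K (f i) t) (hbdd : ∀ x ∈ t, BddAbove ((f · x) '' s)) :
    LipschitzOnWith K (fun x ↦ sSup ((f · x) '' s)) t := by
  refine LipschitzOnWith.of_le_add_mul K fun x hx y hy ↦ ?_
  rcases s.eq_empty_or_nonempty with rfl | hs
  · simp only [Set.image_empty, Real.sSup_empty, zero_add]
    positivity
  refine csSup_le (hs.image _) ?_
  rintro _ ⟨i, hi, rfl⟩
  calc f i x ≤ f i y + K * dist x y := (hf i hi).le_add_mul hx hy
    _ ≤ sSup ((f · y) '' s) + K * dist x y := by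
        gcongr
        exact le_csSup (hbdd y hy) ⟨i, hi, rfl⟩

end SupLipschitz

/-- By the Cauchy estimate, `‖f'‖ ≤ M / ρ` on the smaller ball. -/
theorem Differentiable.lipschitzOnWith_closedBall {f : ℂ → ℂ} (hf : Differentiable ℂ f)
    {c : ℂ} {r : ℝ} {ρ : ℝ≥0} (hρ : 0 < ρ) {M : ℝ≥0}
    (hM : ∀ w ∈ closedBall c (r + ρ), ‖f w‖ ≤ M) :
    LipschitzOnWith (M / ρ) f (closedBall c r) := by
  refine (convex_closedBall c r).lipschitzOnWith_of_nnnorm_deriv_le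
    (fun u _ ↦ hf.differentiableAt) fun u hu ↦ ?_
  have hsphere : ∀ w ∈ sphere u ρ, ‖f w‖ ≤ M := fun w hw ↦ hM w <| by
    rw [mem_closedBall] at hu ⊢
    rw [mem_sphere] at hw
    linarith [dist_triangle w u c]
  rw [← NNReal.coe_le_coe, coe_nnnorm, NNReal.coe_div]
  exact Complex.norm_deriv_le_of_forall_mem_sphere_norm_le hρ hf.diffContOnCl hsphere

section PointEvaluation

variable {E : Type*} [NormedAddCommGroup E] [NormedSpace ℂ E] [CompleteSpace E]

/-- Banach–Steinhaus, applied to the evaluations at the points of `K`. -/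
theorem exists_norm_eval_le_of_isCompact (ev : E →ₗ[ℂ] (ℂ → ℂ)) (hcont : ∀ F, Continuous (ev F))
    (heval : ∀ w : ℂ, Continuous fun F : E ↦ ev F w) {K : Set ℂ} (hK : IsCompact K) :
    ∃ C : ℝ≥0, ∀ w ∈ K, ∀ F : E, ‖F‖ ≤ 1 → ‖ev F w‖ ≤ C := by
  let evalCLM (w : K) : E →L[ℂ] ℂ := ⟨(LinearMap.proj (w : ℂ)).comp ev, heval w⟩
  obtain ⟨C, hC⟩ : ∃ C, ∀ w : K, ‖evalCLM w‖ ≤ C := banach_steinhaus fun F ↦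
    (hK.exists_bound_of_continuousOn (hcont F).continuousOn).imp fun _ h w ↦ h w w.2
  refine ⟨C.toNNReal, fun w hw F hF ↦ ?_⟩
  calc ‖ev F w‖ = ‖evalCLM ⟨w, hw⟩ F‖ := rfl
    _ ≤ C * ‖F‖ := (evalCLM ⟨w, hw⟩).le_of_opNorm_le (hC _) F
    _ ≤ C.toNNReal := by
        have := (norm_nonneg _).trans (hC ⟨w, hw⟩)
        rw [Real.coe_toNNReal _ this]
        exact mul_le_of_le_one_right this hF

end PointEvaluation

theorem mflat_finite_and_continuousOn_general
    (ev : H →ₗ[ℂ] (ℂ → ℂ))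
    (hentire : ∀ F : H, Differentiable ℂ (ev F))
    (heval : ∀ w : ℂ, Continuous fun F : H => ev F w)
    (D : Set ℂ)
    (m : ℂ → ℝ) :
    (∀ z : ℂ, 0 ≤ z.im →
      BddAbove ((fun F : H => ‖ev F z‖) '' BmSet ev D m)) ∧
    ContinuousOn (mflat ev D m) {z : ℂ | 0 ≤ z.im} := by
  have hcont F := (hentire F).continuous
  have hbdd (z : ℂ) : BddAbove ((fun F : H => ‖ev F z‖) '' BmSet ev D m) := by
    obtain ⟨C, hC⟩ := exists_norm_eval_le_of_isCompact ev hcont heval isCompact_singleton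
    exact ⟨C, by rintro _ ⟨F, hF, rfl⟩; exact hC z rfl F hF.1⟩
  refine ⟨fun z _ ↦ hbdd z, LocallyLipschitz.continuous (fun z₀ ↦ ?_) |>.continuousOn⟩
  obtain ⟨C, hC⟩ :=
    exists_norm_eval_le_of_isCompact ev hcont heval (isCompact_closedBall z₀ (1 + 1))
  refine ⟨C, closedBall z₀ 1, closedBall_mem_nhds z₀ one_pos, ?_⟩
  refine LipschitzOnWith.csSup_image (fun F hF ↦ ?_) fun z _ ↦ hbdd z
  have hF_lip := (hentire F).lipschitzOnWith_closedBall one_pos fun w hw ↦ hC w hw F hF.1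
  have hnorm := lipschitzWith_one_norm.comp_lipschitzOnWith hF_lip
  rwa [one_mul, div_one] at hnorm

/-- **Statement 19.** The sharp majorant `m^♭` is finite (the defining supremum is over
a set which is bounded above) and continuous on the closed upper half-plane. -/
theorem mflat_finite_and_continuousOn
    (ev : H →ₗ[ℂ] (ℂ → ℂ)) (hinj : Function.Injective ev)
    (hentire : ∀ F : H, Differentiable ℂ (ev F))
    (heval : ∀ w : ℂ, Continuous fun F : H => ev F w)
    (hsharp : ∀ F : H, ∃ G : H,
      (∀ z : ℂ, ev G z = (starRingEnd ℂ) (ev F ((starRingEnd ℂ) z))) ∧ ‖G‖ = ‖F‖)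
    (D : Set ℂ) (hD : D ⊆ {z : ℂ | 0 ≤ z.im})
    (m : ℂ → ℝ) (hm : ∀ z ∈ D, 0 ≤ m z) :
    (∀ z : ℂ, 0 ≤ z.im →
      BddAbove ((fun F : H => ‖ev F z‖) '' BmSet ev D m)) ∧
    ContinuousOn (mflat ev D m) {z : ℂ | 0 ≤ z.im} :=
  mflat_finite_and_continuousOn_general ev hentire heval D m
end
end
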